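/- arXiv:1802.09326 — 2 statements merged into one kernel-verified Lean document; each statement's English description precedes it below -/
import Mathlib

section
/- If ω(n) denotes the minimum cardinality of a weakly 3-suitable family of permutations of [n], and α(n) the minimum cardinality of a 3-suitable family of permutations of [n], then α(n) ≤ 2·ω(n). -/
/-- A family of strict orders is *3-suitable* if for every three distinct elements
`a b c` and distinguished element `a`, some order places `a` after both `b` and `c`. -/
def Fam3Suitable {X ι : Type*} (S : ι → X → X → Prop) : Prop :=
  ∀ a b c : X, a ≠ b → a ≠ c → b ≠ c → ∃ i, S i b a ∧ S i c a

/-- A family of strict orders is *weakly 3-suitable* if for every three distinct elements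
`a b c` and distinguished element `a`, some order places `a` after both `b` and `c`
or before both `b` and `c`. -/
def FamWeakly3Suitable {X ι : Type*} (S : ι → X → X → Prop) : Prop :=
  ∀ a b c : X, a ≠ b → a ≠ c → b ≠ c →
    ∃ i, (S i b a ∧ S i c a) ∨ (S i a b ∧ S i a c)

/-- Minimum cardinality of a weakly 3-suitable family of permutations of `[n]`. -/
noncomputable def permOmega (n : ℕ) : ℕ :=
  sInf {k | ∃ S : Fin k → Fin n → Fin n → Prop,
    (∀ i, IsStrictTotalOrder (Fin n) (S i)) ∧ FamWeakly3Suitable S}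

/-- Minimum cardinality of a 3-suitable family of permutations of `[n]`. -/
noncomputable def permAlpha (n : ℕ) : ℕ :=
  sInf {k | ∃ S : Fin k → Fin n → Fin n → Prop,
    (∀ i, IsStrictTotalOrder (Fin n) (S i)) ∧ Fam3Suitable S}

/-!
Reversing a weakly 3-suitable family and adjoining the reversed orders gives a 3-suitable family:
whenever an order places `a` before both `b` and `c`, its reverse places `a` after both. If no
weakly 3-suitable family of size `k` exists for any `k`, then neither does a 3-suitable one, and
both minima are `sInf ∅ = 0`.
-/

section Suitability

variable {X ι : Type*}

theorem Fam3Suitable.famWeakly3Suitable {S : ι → X → X → Prop} (hS : Fam3Suitable S) :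
    FamWeakly3Suitable S := fun a b c hab hac hbc =>
  (hS a b c hab hac hbc).imp fun _ => Or.inl

theorem Fam3Suitable.comp_surjective {κ : Type*} {S : ι → X → X → Prop} (hS : Fam3Suitable S)
    {e : κ → ι} (he : e.Surjective) : Fam3Suitable (S ∘ e) := fun a b c hab hac hbc => by
  obtain ⟨i, hi⟩ := hS a b c hab hac hbc
  obtain ⟨j, rfl⟩ := he i
  exact ⟨j, hi⟩

def withReverses (S : ι → X → X → Prop) : ι ⊕ ι → X → X → Prop :=
  Sum.elim S fun i => Function.swap (S i)

theorem FamWeakly3Suitable.fam3Suitable_withReverses {S : ι → X → X → Prop}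
    (hS : FamWeakly3Suitable S) : Fam3Suitable (withReverses S) := fun a b c hab hac hbc => by
  obtain ⟨i, hafter | hbefore⟩ := hS a b c hab hac hbc
  · exact ⟨Sum.inl i, hafter⟩
  · exact ⟨Sum.inr i, hbefore⟩

theorem isStrictTotalOrder_withReverses {S : ι → X → X → Prop}
    (hS : ∀ i, IsStrictTotalOrder X (S i)) (j : ι ⊕ ι) :
    IsStrictTotalOrder X (withReverses S j) := by
  cases j with
  | inl i => exact hS i
  | inr i => have := hS i; exact inferInstanceAs (IsStrictTotalOrder X (Function.swap (S i)))

end Suitability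

theorem exists_fam3Suitable_fin_two_mul {X : Type*} {k : ℕ} {S : Fin k → X → X → Prop}
    (hS : ∀ i, IsStrictTotalOrder X (S i)) (hW : FamWeakly3Suitable S) :
    ∃ T : Fin (2 * k) → X → X → Prop, (∀ i, IsStrictTotalOrder X (T i)) ∧ Fam3Suitable T := by
  let e : Fin (2 * k) ≃ Fin k ⊕ Fin k := (finCongr (two_mul k)).trans finSumFinEquiv.symm
  exact ⟨withReverses S ∘ e, fun i => isStrictTotalOrder_withReverses hS (e i),
    hW.fam3Suitable_withReverses.comp_surjective e.surjective⟩

/-- `α(n) ≤ 2·ω(n)`: the minimum size of a 3-suitable family of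
permutations of `[n]` is at most twice the minimum size of a weakly 3-suitable family. -/
theorem permAlpha_le_two_mul_permOmega (n : ℕ) :
    permAlpha n ≤ 2 * permOmega n := by
  rcases Set.eq_empty_or_nonempty {k | ∃ S : Fin k → Fin n → Fin n → Prop,
      (∀ i, IsStrictTotalOrder (Fin n) (S i)) ∧ FamWeakly3Suitable S} with hnone | hsome
  · have hAlpha : permAlpha n = 0 := by
      refine Nat.sInf_eq_zero.mpr (Or.inr ?_)
      refine Set.eq_empty_of_forall_notMem fun k ⟨S, hSTO, hS⟩ => ?_
      exact hnone.subset ⟨S, hSTO, hS.famWeakly3Suitable⟩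
    simp [hAlpha]
  · obtain ⟨S, hSTO, hW⟩ := Nat.sInf_mem hsome
    exact Nat.sInf_le (exists_fam3Suitable_fin_two_mul hSTO hW)
end

section
/- For n = Δ^r with positive integers Δ ≥ 2, r ≥ 1, the dimension of the poset P(1,2;n) of 1-element and 2-element subsets of [n] ordered by inclusion satisfies log₂ log₂ Δ + log₂ r < dim(P(1,2;n)) ≤ 2⌈log₂ log₂ Δ⌉ + 2⌈log₂ r⌉ + 3. -/
/-- `L` is a (non-strict) linear order relation on `X`. -/
def IsLinearOrderRel {X : Type*} (L : X → X → Prop) : Prop :=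
  (∀ a, L a a) ∧ (∀ a b, L a b → L b a → a = b) ∧
  (∀ a b c, L a b → L b c → L a c) ∧ (∀ a b, L a b ∨ L b a)

/-- The poset `X` has dimension at most `k`: there are `k` linear extensions of the order
whose intersection is the order. -/
def DimLE (X : Type*) [PartialOrder X] (k : ℕ) : Prop :=
  ∃ L : Fin k → X → X → Prop,
    (∀ i, IsLinearOrderRel (L i)) ∧ ∀ a b : X, a ≤ b ↔ ∀ i, L i a b

/-- The dimension of the poset `X`. -/
noncomputable def posetDim (X : Type*) [PartialOrder X] : ℕ :=
  sInf {k | DimLE X k}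

/-!
Upper bound: order `[n] ⊆ [0, 2^L)` by the keys `x ↦ x xor m`. Under such a key, `c` beats `u` iff
the bit of `m` at the highest bit `p` where `c` and `u` differ is not the bit of `c`. The masks
whose bit at position `p` is `ν xor (bit j of p)` (`j ≤ B`, `L ≤ 2^B`) realise every prescribed
pair of values at any two positions, so some key puts any `c` above any two other points; the
colex orders of these `2(B + 1)` keys then realise `P(1,2;n)`.

Lower bound: given a realizer indexed by `ι`, assign to each point `a` the family of the sets
`{i | {b} <ᵢ {a}}` for `b ≠ a`. These are nonempty subsets of `ι`, and distinct points get distinct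
families (a pair `{x, a}` lies below `{b}` in some coordinate), so `n ≤ 2^(2^|ι| - 1)`.
-/

open Finset Finset.Colex

namespace Nat

lemma exists_highest_testBit_ne {x y : ℕ} (h : x ≠ y) :
    ∃ p, x.testBit p ≠ y.testBit p ∧ ∀ i, p < i → x.testBit i = y.testBit i := by
  obtain ⟨p, hp, hhigh⟩ := exists_most_significant_bit (xor_ne_zero_iff.mpr h)
  exact ⟨p, by simpa using hp, fun i hi => by simpa using hhigh i hi⟩

lemma lt_of_testBit_ne {x y p L : ℕ} (hx : x < 2 ^ L) (hy : y < 2 ^ L)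
    (h : x.testBit p ≠ y.testBit p) : p < L := by
  by_contra! hLp
  have h2 := pow_le_pow_right₀ (le_succ 1) hLp
  exact h (by rw [testBit_lt_two_pow (hx.trans_le h2), testBit_lt_two_pow (hy.trans_le h2)])

lemma xor_lt_xor_of_highest_testBit_ne {x y m p : ℕ} (hne : x.testBit p ≠ y.testBit p)
    (hhigh : ∀ i, p < i → x.testBit i = y.testBit i) (hy : y.testBit p ≠ m.testBit p) :
    x ^^^ m < y ^^^ m := by
  refine lt_of_testBit p ?_ ?_ fun i hi => by simp [hhigh i hi]
  · rw [testBit_xor]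
    revert hne hy; cases x.testBit p <;> cases y.testBit p <;> cases m.testBit p <;> simp
  · rw [testBit_xor]
    revert hy; cases y.testBit p <;> cases m.testBit p <;> simp

def bitMask (L j : ℕ) (ν : Bool) : ℕ :=
  ∑ p ∈ (range L).filter (fun p => (p.testBit j ^^ ν) = true), 2 ^ p

lemma testBit_bitMask {L j p : ℕ} (ν : Bool) (hp : p < L) :
    (bitMask L j ν).testBit p = (p.testBit j ^^ ν) := by
  rw [Bool.eq_iff_iff, ← mem_bitIndices, ← List.mem_toFinset, bitMask,
    toFinset_bitIndices_sum_two_pow]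
  simp [hp]

lemma exists_bitMask_testBit_eq {L B p q : ℕ} (hLB : L ≤ 2 ^ B) (hp : p < L) (hq : q < L)
    (a b : Bool) (hab : p = q → a = b) :
    ∃ j ≤ B, ∃ ν, (bitMask L j ν).testBit p = a ∧ (bitMask L j ν).testBit q = b := by
  by_cases h : a = b
  · subst h
    refine ⟨B, le_rfl, a, ?_⟩
    simp [testBit_bitMask, hp, hq, testBit_lt_two_pow ((hp.trans_le hLB)),
      testBit_lt_two_pow ((hq.trans_le hLB))]
  · obtain ⟨j, hj, -⟩ := exists_highest_testBit_ne fun e => h (hab e)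
    refine ⟨j, (lt_of_testBit_ne (hp.trans_le hLB) (hq.trans_le hLB) hj).le,
      p.testBit j ^^ a, ?_⟩
    rw [testBit_bitMask _ hp, testBit_bitMask _ hq]
    revert h hj; cases a <;> cases b <;> cases p.testBit j <;> cases q.testBit j <;> simp

lemma exists_bitMask_xor_lt {L B c u v : ℕ} (hLB : L ≤ 2 ^ B) (hc : c < 2 ^ L)
    (hu : u < 2 ^ L) (hv : v < 2 ^ L) (hcu : c ≠ u) (hcv : c ≠ v) :
    ∃ j ≤ B, ∃ ν, u ^^^ bitMask L j ν < c ^^^ bitMask L j ν ∧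
      v ^^^ bitMask L j ν < c ^^^ bitMask L j ν := by
  obtain ⟨p, hp, hphigh⟩ := exists_highest_testBit_ne hcu.symm
  obtain ⟨q, hq, hqhigh⟩ := exists_highest_testBit_ne hcv.symm
  obtain ⟨j, hj, ν, hmp, hmq⟩ := exists_bitMask_testBit_eq hLB (lt_of_testBit_ne hu hc hp)
    (lt_of_testBit_ne hv hc hq) (!c.testBit p) (!c.testBit q) (by rintro rfl; rfl)
  exact ⟨j, hj, ν, xor_lt_xor_of_highest_testBit_ne hp hphigh (by simp [hmp]),
    xor_lt_xor_of_highest_testBit_ne hq hqhigh (by simp [hmq])⟩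

lemma clog_pow_le {b : ℕ} (hb : 1 < b) (n r : ℕ) : clog b (n ^ r) ≤ r * clog b n :=
  clog_le_of_le_pow <| by
    rw [mul_comm, pow_mul]
    exact Nat.pow_le_pow_left (le_pow_clog hb n) r

lemma clog_mul_le {b : ℕ} (hb : 1 < b) (m n : ℕ) : clog b (m * n) ≤ clog b m + clog b n :=
  clog_le_of_le_pow <| by
    rw [pow_add]
    exact Nat.mul_le_mul (le_pow_clog hb m) (le_pow_clog hb n)

end Nat

lemma Real.logb_logb_lt_of_lt_two_pow_two_pow {x : ℝ} {k : ℕ} (hx : 1 < x)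
    (h : x < 2 ^ 2 ^ k) : logb 2 (logb 2 x) < k := by
  rw [logb_lt_iff_lt_rpow one_lt_two (logb_pos one_lt_two hx),
    logb_lt_iff_lt_rpow one_lt_two (by linarith)]
  exact_mod_cast h

def IsRealizer {X ι : Type*} [PartialOrder X] (L : ι → X → X → Prop) : Prop :=
  (∀ i, IsLinearOrderRel (L i)) ∧ ∀ a b : X, a ≤ b ↔ ∀ i, L i a b

lemma IsLinearOrderRel.of_injective {X Y : Type*} [LinearOrder Y] {f : X → Y}
    (hf : Function.Injective f) : IsLinearOrderRel fun a b => f a ≤ f b :=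
  ⟨fun _ => le_rfl, fun _ _ hab hba => hf (le_antisymm hab hba), fun _ _ _ => le_trans,
    fun a b => le_total (f a) (f b)⟩

namespace IsRealizer

variable {X ι : Type*} [PartialOrder X] {L : ι → X → X → Prop}

lemma dimLE [Fintype ι] (hL : IsRealizer L) : DimLE X (Fintype.card ι) := by
  let e := Fintype.equivFin ι
  exact ⟨fun i => L (e.symm i), fun i => hL.1 _,
    fun a b => (hL.2 a b).trans e.symm.forall_congr_right.symm⟩

lemma rel_of_le (hL : IsRealizer L) {a b : X} (h : a ≤ b) (i : ι) : L i a b :=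
  (hL.2 a b).1 h i

lemma exists_rel_of_not_le (hL : IsRealizer L) {a b : X} (h : ¬a ≤ b) : ∃ i, L i b a := by
  obtain ⟨i, hi⟩ := not_forall.mp ((hL.2 a b).not.mp h)
  obtain ⟨-, -, -, htotal⟩ := hL.1 i
  exact ⟨i, (htotal a b).resolve_left hi⟩

end IsRealizer

lemma dimLE_posetDim {X : Type*} [PartialOrder X] {k : ℕ} (h : DimLE X k) :
    DimLE X (posetDim X) :=
  Nat.sInf_mem (s := {k | DimLE X k}) ⟨k, h⟩

lemma posetDim_le {X : Type*} [PartialOrder X] {k : ℕ} (h : DimLE X k) : posetDim X ≤ k :=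
  Nat.sInf_le h

abbrev P12 (α : Type*) := {s : Finset α // s.card = 1 ∨ s.card = 2}

namespace P12

variable {α : Type*}

def single (a : α) : P12 α := ⟨{a}, Or.inl (card_singleton a)⟩

def pair [DecidableEq α] {a b : α} (h : a ≠ b) : P12 α := ⟨{a, b}, Or.inr (card_pair h)⟩

@[simp]
lemma single_le_iff {a : α} {s : P12 α} : single a ≤ s ↔ a ∈ s.1 :=
  singleton_subset_iff

lemma exists_eq_pair [DecidableEq α] (s : P12 α) : ∃ u v, s.1 = {u, v} := by
  rcases s.2 with h | h
  · obtain ⟨u, hu⟩ := card_eq_one.mp h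
    exact ⟨u, u, by rw [hu, pair_eq_singleton]⟩
  · obtain ⟨u, v, -, huv⟩ := card_eq_two.mp h
    exact ⟨u, v, huv⟩

end P12

section UpperBound

variable {α β ι : Type*} [LinearOrder β]

lemma not_toColex_map_le {κ : α ↪ β} {s t : Finset α} {c : α} (hc : c ∈ s)
    (ht : ∀ u ∈ t, κ u < κ c) : ¬toColex (s.map κ) ≤ toColex (t.map κ) := by
  intro h
  obtain ⟨b, hbt, -, hcb⟩ := toColex_le_toColex.mp h (mem_map_of_mem κ hc)
    fun hct => (ht _ ((mem_map' κ).mp hct)).false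
  obtain ⟨u, hu, rfl⟩ := mem_map.mp hbt
  exact (ht u hu).not_ge hcb

theorem isRealizer_P12_colex [DecidableEq α] (κ : ι → α ↪ β)
    (hκ : ∀ c u v, c ≠ u → c ≠ v → ∃ i, κ i u < κ i c ∧ κ i v < κ i c) :
    IsRealizer fun i (s t : P12 α) => toColex (s.1.map (κ i)) ≤ toColex (t.1.map (κ i)) := by
  refine ⟨fun i => IsLinearOrderRel.of_injective fun s t h => Subtype.ext ?_, fun s t => ⟨?_, ?_⟩⟩
  · exact map_injective (κ i) (toColex.injective h)
  · exact fun hst i => toColex_mono (map_subset_map.mpr hst)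
  · intro h
    by_contra hst
    obtain ⟨c, hcs, hct⟩ := not_subset.mp hst
    obtain ⟨u, v, huv⟩ := P12.exists_eq_pair t
    rw [huv, mem_insert, mem_singleton, not_or] at hct
    obtain ⟨i, hu, hv⟩ := hκ c u v hct.1 hct.2
    refine not_toColex_map_le hcs ?_ (h i)
    rw [huv]
    simp [hu, hv]

theorem dimLE_P12_fin {n L B : ℕ} (hn : n ≤ 2 ^ L) (hL : L ≤ 2 ^ B) :
    DimLE (P12 (Fin n)) (2 * (B + 1)) := by
  let κ : Fin (B + 1) × Bool → Fin n ↪ ℕ := fun jν =>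
    ⟨fun x => x.val ^^^ Nat.bitMask L jν.1 jν.2, fun x y h => Fin.ext (by simpa using h)⟩
  have hκ : ∀ c u v, c ≠ u → c ≠ v → ∃ i, κ i u < κ i c ∧ κ i v < κ i c := by
    intro c u v hcu hcv
    have hlt (x : Fin n) : x.val < 2 ^ L := x.isLt.trans_le hn
    obtain ⟨j, hj, ν, hu, hv⟩ := Nat.exists_bitMask_xor_lt hL (hlt c) (hlt u) (hlt v)
      (Fin.val_ne_of_ne hcu) (Fin.val_ne_of_ne hcv)
    exact ⟨(⟨j, Nat.lt_succ_of_le hj⟩, ν), hu, hv⟩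
  simpa [mul_comm] using (isRealizer_P12_colex κ hκ).dimLE

theorem posetDim_P12_fin_le (n : ℕ) :
    posetDim (P12 (Fin n)) ≤ 2 * Nat.clog 2 (Nat.clog 2 n) + 2 :=
  posetDim_le (dimLE_P12_fin (Nat.le_pow_clog one_lt_two n) (Nat.le_pow_clog one_lt_two _))

end UpperBound

section LowerBound

open scoped Classical

variable {α ι : Type*} {L : ι → P12 α → P12 α → Prop}

open P12

lemma IsRealizer.exists_rel_single_single (hL : IsRealizer L) {a b : α} (hab : a ≠ b) :
    ∃ i, L i (single b) (single a) :=
  hL.exists_rel_of_not_le (by simpa [single] using hab)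

lemma IsRealizer.exists_rel_single_single_of_ne (hL : IsRealizer L) {a b x : α} (hab : a ≠ b)
    (hxb : x ≠ b) : ∃ i, L i (single x) (single b) ∧ L i (single a) (single b) := by
  by_cases hxa : x = a
  · subst hxa
    obtain ⟨i, hi⟩ := hL.exists_rel_single_single hab.symm
    exact ⟨i, hi, hi⟩
  · obtain ⟨i, hi⟩ := hL.exists_rel_of_not_le (a := single b) (b := pair hxa)
      (by simp [pair, hab.symm, hxb.symm])
    obtain ⟨-, -, htrans, -⟩ := hL.1 i
    exact ⟨i, htrans _ _ _ (hL.rel_of_le (by simp [pair]) i) hi,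
      htrans _ _ _ (hL.rel_of_le (by simp [pair]) i) hi⟩

variable [Fintype α] [Fintype ι]

noncomputable def coordSetsBelow (L : ι → P12 α → P12 α → Prop) (a : α) : Finset (Finset ι) :=
  (univ.erase a).image fun b => univ.filter fun i => L i (single b) (single a)

lemma IsRealizer.coordSetsBelow_subset (hL : IsRealizer L) (a : α) :
    coordSetsBelow L a ⊆ univ.erase ∅ := by
  intro S hS
  simp only [coordSetsBelow, mem_image, mem_erase] at hS
  obtain ⟨b, ⟨hba, -⟩, rfl⟩ := hS
  obtain ⟨i, hi⟩ := hL.exists_rel_single_single hba.symm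
  exact mem_erase.mpr ⟨ne_empty_of_mem (mem_filter.mpr ⟨mem_univ i, hi⟩), mem_univ _⟩

lemma IsRealizer.coordSetsBelow_injective (hL : IsRealizer L) :
    Function.Injective (coordSetsBelow L) := by
  intro a b hab
  by_contra hne
  have hmem : (univ.filter fun i => L i (single b) (single a)) ∈ coordSetsBelow L b := by
    rw [← hab]
    exact mem_image_of_mem _ (mem_erase.mpr ⟨Ne.symm hne, mem_univ b⟩)
  simp only [coordSetsBelow, mem_image, mem_erase] at hmem
  obtain ⟨x, ⟨hxb, -⟩, hx⟩ := hmem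
  obtain ⟨i, hix, hia⟩ := hL.exists_rel_single_single_of_ne hne hxb
  have hib : i ∈ univ.filter fun i => L i (single x) (single b) := mem_filter.mpr ⟨mem_univ i, hix⟩
  rw [hx, mem_filter] at hib
  obtain ⟨-, hantisymm, -, -⟩ := hL.1 i
  exact hne (singleton_injective (congrArg Subtype.val (hantisymm _ _ hia hib.2)))

theorem IsRealizer.card_le (hL : IsRealizer L) :
    Fintype.card α ≤ 2 ^ (2 ^ Fintype.card ι - 1) := by
  have h := card_le_card_of_injOn (coordSetsBelow L) (s := univ) (t := (univ.erase ∅).powerset)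
    (fun a _ => mem_powerset.mpr (hL.coordSetsBelow_subset a)) hL.coordSetsBelow_injective.injOn
  simpa [card_erase_of_mem] using h

theorem card_lt_of_dimLE {k : ℕ} (h : DimLE (P12 α) k) : Fintype.card α < 2 ^ 2 ^ k := by
  obtain ⟨L, hL⟩ := h
  calc Fintype.card α ≤ 2 ^ (2 ^ k - 1) := by simpa using IsRealizer.card_le (L := L) hL
    _ < 2 ^ 2 ^ k := Nat.pow_lt_pow_right one_lt_two (Nat.sub_lt (Nat.two_pow_pos k) one_pos)

end LowerBound

theorem lt_two_pow_two_pow_posetDim_P12_fin (n : ℕ) : n < 2 ^ 2 ^ posetDim (P12 (Fin n)) := by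
  simpa using card_lt_of_dimLE (dimLE_posetDim
    (dimLE_P12_fin (n := n) (Nat.le_pow_clog one_lt_two _) (Nat.le_pow_clog one_lt_two _)))

/-- For `n = Δ^r` (`Δ ≥ 2`, `r ≥ 1`), the dimension of the poset
`P(1,2;n)` of 1- and 2-element subsets of `[n]` ordered by inclusion satisfies
`log₂ log₂ Δ + log₂ r < dim(P(1,2;n)) ≤ 2⌈log₂ log₂ Δ⌉ + 2⌈log₂ r⌉ + 3`. -/
theorem P12_dim_bounds (Δ r : ℕ) (hΔ : 2 ≤ Δ) (hr : 1 ≤ r)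
    (n : ℕ) (hn : n = Δ ^ r) :
    Real.logb 2 (Real.logb 2 (Δ : ℝ)) + Real.logb 2 (r : ℝ)
        < (posetDim {s : Finset (Fin n) // s.card = 1 ∨ s.card = 2} : ℝ) ∧
    posetDim {s : Finset (Fin n) // s.card = 1 ∨ s.card = 2}
        ≤ 2 * Nat.clog 2 (Nat.clog 2 Δ) + 2 * Nat.clog 2 r + 3 := by
  subst hn
  have hΔ' : (1 : ℝ) < Δ := by exact_mod_cast hΔ
  have hr' : (0 : ℝ) < r := by exact_mod_cast hr
  constructor
  · rw [add_comm, ← Real.logb_mul hr'.ne' (Real.logb_pos one_lt_two hΔ').ne', ← Real.logb_pow]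
    exact Real.logb_logb_lt_of_lt_two_pow_two_pow (one_lt_pow₀ hΔ' (by omega))
      (by exact_mod_cast lt_two_pow_two_pow_posetDim_P12_fin (Δ ^ r))
  · calc posetDim (P12 (Fin (Δ ^ r))) ≤ 2 * Nat.clog 2 (Nat.clog 2 (Δ ^ r)) + 2 :=
          posetDim_P12_fin_le _
      _ ≤ 2 * Nat.clog 2 (r * Nat.clog 2 Δ) + 2 := by
          gcongr; exact Nat.clog_pow_le one_lt_two Δ r
      _ ≤ 2 * (Nat.clog 2 r + Nat.clog 2 (Nat.clog 2 Δ)) + 2 := by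
          gcongr; exact Nat.clog_mul_le one_lt_two _ _
      _ ≤ 2 * Nat.clog 2 (Nat.clog 2 Δ) + 2 * Nat.clog 2 r + 3 := by omega
end
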